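/- For every integer n ≥ 2, Σ_{k=1}^{n−1} p_K(n,k)·H_k² = 2((n+1)H̄_n + n − H_n² − 2H_n)/(n−1) and Σ_{k=1}^{n−1} p_K(n,k)·H̄_k = (2nH̄_n − 2n)/(n−1). In particular, as n → ∞ these expressions converge to π²/3 + 2 and π²/3 − 2 respectively, with error O(n^{-1} log² n). -/
import Mathlib


open Finset

/-- `n`-th harmonic number. -/
noncomputable def H (n : ℕ) : ℝ := ∑ k ∈ Finset.Icc 1 n, (1 : ℝ) / k

/-- Second-order harmonic number. -/
noncomputable def Hbar (n : ℕ) : ℝ := ∑ k ∈ Finset.Icc 1 n, (1 : ℝ) / (k : ℝ) ^ 2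

noncomputable def pK (n k : ℕ) : ℝ :=
  ((n : ℝ) + 1) / ((n : ℝ) - 1) * (2 / (((k : ℝ) + 1) * ((k : ℝ) + 2)))

noncomputable def pL (n k : ℕ) : ℝ :=
  ((n : ℝ) + 1) * ((n : ℝ) + 2) / (((n : ℝ) - 1) * ((n : ℝ) - 2)) *
    (6 * ((k : ℝ) - 1) / (((k : ℝ) + 1) * ((k : ℝ) + 2) * ((k : ℝ) + 3)))

noncomputable def pM (n k : ℕ) : ℝ :=
  ((n : ℝ) + 1) * ((n : ℝ) + 2) * ((n : ℝ) + 3) /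
      (((n : ℝ) - 1) * ((n : ℝ) - 2) * ((n : ℝ) - 3)) *
    (12 * ((k : ℝ) - 1) * ((k : ℝ) - 2) /
      (((k : ℝ) + 1) * ((k : ℝ) + 2) * ((k : ℝ) + 3) * ((k : ℝ) + 4)))

noncomputable def pKL (n k : ℕ) : ℝ :=
  ((n : ℝ) + 1) / (((n : ℝ) - 1) * ((n : ℝ) - 2)) *
    (12 / (((k : ℝ) + 1) * ((k : ℝ) + 2))) * (((n : ℝ) + 2) / ((k : ℝ) + 3) - 1)

noncomputable def pLM (n k : ℕ) : ℝ :=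
  ((n : ℝ) + 1) * ((n : ℝ) + 2) / (((n : ℝ) - 1) * ((n : ℝ) - 2) * ((n : ℝ) - 3)) *
    (72 * ((k : ℝ) - 1) / (((k : ℝ) + 1) * ((k : ℝ) + 2) * ((k : ℝ) + 3))) *
      (((n : ℝ) + 3) / ((k : ℝ) + 4) - 1)

noncomputable def pKLM (n k : ℕ) : ℝ :=
  ((n : ℝ) + 3) / (((n : ℝ) - 1) * ((n : ℝ) - 2) * ((n : ℝ) - 3)) *
      (72 / (((k : ℝ) + 1) * ((k : ℝ) + 2))) *
      (((n : ℝ) + 1) * ((n : ℝ) + 2) / (((k : ℝ) + 3) * ((k : ℝ) + 4)) - 1) -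
    ((n : ℝ) + 2) / (((n : ℝ) - 1) * ((n : ℝ) - 2) * ((n : ℝ) - 3)) *
      (144 / (((k : ℝ) + 1) * ((k : ℝ) + 2))) * (((n : ℝ) + 1) / ((k : ℝ) + 3) - 1)

set_option maxHeartbeats 1000000

lemma H_succ (n : ℕ) : H (n + 1) = H n + 1 / (n + 1 : ℝ) := by
  simp [H, Finset.sum_Icc_succ_top (Nat.le_add_left 1 n)]

lemma Hbar_succ (n : ℕ) : Hbar (n + 1) = Hbar n + 1 / ((n : ℝ) + 1) ^ 2 := by
  simp [Hbar, Finset.sum_Icc_succ_top (Nat.le_add_left 1 n)]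

lemma sumA (m : ℕ) :
    ∑ k ∈ Finset.Icc 1 m, 2 / (((k : ℝ) + 1) * ((k : ℝ) + 2)) * (H k) ^ 2 =
      2 * Hbar (m + 1) + 2 * (((m : ℝ) + 1) - (H (m + 1)) ^ 2 - 2 * H (m + 1)) / ((m : ℝ) + 2) := by
  induction m with
  | zero => simp [H, Hbar]; norm_num
  | succ m ih =>
    rw [Finset.sum_Icc_succ_top (Nat.le_add_left 1 m), ih, H_succ (m+1), Hbar_succ (m+1),
      H_succ m]
    push_cast
    have h1 : (m : ℝ) + 1 ≠ 0 := by positivity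
    have h2 : (m : ℝ) + 2 ≠ 0 := by positivity
    have h3 : (m : ℝ) + 3 ≠ 0 := by positivity
    field_simp
    ring

lemma sumB (m : ℕ) :
    ∑ k ∈ Finset.Icc 1 m, 2 / (((k : ℝ) + 1) * ((k : ℝ) + 2)) * Hbar k =
      (2 * ((m : ℝ) + 1) * Hbar (m + 1) - 2 * ((m : ℝ) + 1)) / ((m : ℝ) + 2) := by
  induction m with
  | zero => simp [Hbar]
  | succ m ih =>
    rw [Finset.sum_Icc_succ_top (Nat.le_add_left 1 m), ih, Hbar_succ (m+1), Hbar_succ m]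
    push_cast
    have h1 : (m : ℝ) + 1 ≠ 0 := by positivity
    have h2 : (m : ℝ) + 2 ≠ 0 := by positivity
    have h3 : (m : ℝ) + 3 ≠ 0 := by positivity
    field_simp
    ring

lemma Hbar_eq_range (n : ℕ) : Hbar n = ∑ k ∈ Finset.range (n + 1), (1 : ℝ) / (k : ℝ) ^ 2 := by
  rw [Finset.range_eq_Ico, Finset.sum_eq_sum_Ico_succ_bot (by omega : 0 < n + 1)]
  rw [Finset.Ico_add_one_right_eq_Icc]
  simp [Hbar]

lemma H_le_log (n : ℕ) : H n ≤ 1 + Real.log n := by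
  have := harmonic_le_one_add_log n
  have hH : H n = (harmonic n : ℝ) := by
    rw [harmonic_eq_sum_Icc]
    push_cast [H]
    simp [one_div]
  rw [hH]; exact_mod_cast this

lemma tendsto_Hbar : Filter.Tendsto Hbar Filter.atTop (nhds (Real.pi ^ 2 / 6)) := by
  have h := hasSum_zeta_two.tendsto_sum_nat
  have := h.comp (Filter.tendsto_add_atTop_nat 1)
  refine this.congr fun m => ?_
  simp only [Function.comp, Hbar_eq_range, one_div]

lemma Hbar_le (n : ℕ) : Hbar n ≤ Real.pi ^ 2 / 6 := by
  refine le_of_tendsto_of_tendsto tendsto_const_nhds tendsto_Hbar ?_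
  filter_upwards [Filter.eventually_ge_atTop n] with m hm
  rw [Hbar_eq_range, Hbar_eq_range]
  exact Finset.sum_le_sum_of_subset_of_nonneg (by simp [Nat.succ_le_succ hm])
    (fun i _ _ => by positivity)

lemma Hbar_mono_bound {n m : ℕ} (hn : 1 ≤ n) (hm : n ≤ m) :
    Hbar m ≤ Hbar n + 1 / (n : ℝ) - 1 / (m : ℝ) := by
  induction m with
  | zero => omega
  | succ m ih =>
    rcases Nat.lt_or_ge n (m + 1) with h | h
    · have hmn : n ≤ m := by omega
      have h1 : (1 : ℝ) ≤ m := by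
        have : 1 ≤ m := by omega
        exact_mod_cast this
      have key : Hbar (m + 1) = Hbar m + 1 / ((m : ℝ) + 1) ^ 2 := by
        simp [Hbar, Finset.sum_Icc_succ_top (Nat.le_add_left 1 m)]
      have := ih hmn
      have hsq : 1 / ((m : ℝ) + 1) ^ 2 ≤ 1 / (m : ℝ) - 1 / ((m : ℝ) + 1) := by
        rw [div_sub_div _ _ (by linarith) (by linarith)]
        rw [div_le_div_iff₀ (by positivity) (by positivity)]
        ring_nf
        nlinarith
      push_cast
      linarith
    · have : n = m + 1 := by omega
      subst this
      simp

lemma le_Hbar {n : ℕ} (hn : 1 ≤ n) : Real.pi ^ 2 / 6 ≤ Hbar n + 1 / (n : ℝ) := by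
  refine le_of_tendsto_of_tendsto tendsto_Hbar tendsto_const_nhds ?_
  filter_upwards [Filter.eventually_ge_atTop n] with m hm
  have h0 : (0:ℕ) < m := Nat.lt_of_lt_of_le hn hm
  have : (0:ℝ) ≤ 1 / (m : ℝ) := by positivity
  linarith [Hbar_mono_bound hn hm]

lemma H_nonneg (n : ℕ) : 0 ≤ H n :=
  Finset.sum_nonneg fun i _ => by positivity

lemma part1 (n : ℕ) (hn : 2 ≤ n) :
      (∑ k ∈ Finset.Icc 1 (n - 1), pK n k * (H k) ^ 2 =
        2 * (((n : ℝ) + 1) * Hbar n + (n : ℝ) - (H n) ^ 2 - 2 * H n) / ((n : ℝ) - 1)) ∧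
      (∑ k ∈ Finset.Icc 1 (n - 1), pK n k * Hbar k =
        (2 * (n : ℝ) * Hbar n - 2 * (n : ℝ)) / ((n : ℝ) - 1)) := by
  obtain ⟨m, rfl⟩ : ∃ m, n = m + 1 := ⟨n - 1, by omega⟩
  have hm : 1 ≤ m := by omega
  have hm1 : (1:ℝ) ≤ (m:ℝ) := by exact_mod_cast hm
  have key : ∀ X : ℕ → ℝ, ∑ k ∈ Finset.Icc 1 (m + 1 - 1), pK (m+1) k * X k =
      (((m:ℝ)+1) + 1) / (((m:ℝ)+1) - 1) *
        ∑ k ∈ Finset.Icc 1 m, 2 / (((k : ℝ) + 1) * ((k : ℝ) + 2)) * X k := by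
    intro X
    rw [Nat.add_sub_cancel, Finset.mul_sum]
    refine Finset.sum_congr rfl fun k _ => ?_
    simp only [pK]
    push_cast
    ring
  constructor
  · rw [key, sumA m]
    push_cast
    field_simp
    ring
  · rw [key, sumB m]
    push_cast
    field_simp
    ring

theorem expectation_H_K_sq_and_Hbar_K :
    (∀ n : ℕ, 2 ≤ n →
      ∑ k ∈ Finset.Icc 1 (n - 1), pK n k * (H k) ^ 2 =
        2 * (((n : ℝ) + 1) * Hbar n + (n : ℝ) - (H n) ^ 2 - 2 * H n) / ((n : ℝ) - 1) ∧
      ∑ k ∈ Finset.Icc 1 (n - 1), pK n k * Hbar k =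
        (2 * (n : ℝ) * Hbar n - 2 * (n : ℝ)) / ((n : ℝ) - 1)) ∧
    ∃ C : ℝ, 0 < C ∧ ∃ N : ℕ, ∀ n : ℕ, N ≤ n →
      |∑ k ∈ Finset.Icc 1 (n - 1), pK n k * (H k) ^ 2 - (Real.pi ^ 2 / 3 + 2)| ≤
          C * (Real.log n) ^ 2 / n ∧
      |∑ k ∈ Finset.Icc 1 (n - 1), pK n k * Hbar k - (Real.pi ^ 2 / 3 - 2)| ≤
          C * (Real.log n) ^ 2 / n := by
  refine ⟨fun n hn => part1 n hn, 100, by norm_num, 3, fun n hn => ?_⟩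
  obtain ⟨e1, e2⟩ := part1 n (by omega)
  rw [e1, e2]
  set x : ℝ := (n : ℝ) with hxdef
  have hx : (3:ℝ) ≤ x := by rw [hxdef]; exact_mod_cast hn
  set L : ℝ := Real.log n with hLdef
  have hL : 1 ≤ L := by
    rw [hLdef, Real.le_log_iff_exp_le (by linarith : (0:ℝ) < (n:ℝ))]
    have h3n : (3:ℝ) ≤ (n:ℝ) := by exact_mod_cast hn
    have := Real.exp_one_lt_d9
    linarith
  set h : ℝ := H n with hhdef
  set b : ℝ := Hbar n with hbdef
  have hh0 : 0 ≤ h := H_nonneg n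
  have hh1 : h ≤ 2 * L := by
    have := H_le_log n
    rw [← hLdef, ← hhdef] at this
    linarith
  set t : ℝ := Real.pi ^ 2 / 6 - b with htdef
  have hbt : b = Real.pi ^ 2 / 6 - t := by rw [htdef]; ring
  have ht0 : 0 ≤ t := by
    have := Hbar_le n
    rw [← hbdef] at this; rw [htdef]; linarith
  have ht1 : t ≤ 1 / x := by
    have := le_Hbar (n := n) (by omega)
    rw [← hbdef] at this; rw [htdef, hxdef]; linarith
  clear_value t
  clear_value b h L x
  subst hbt
  clear e1 e2 hxdef hLdef hhdef htdef
  have hpi : Real.pi ≤ 4 := Real.pi_le_four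
  have hpi0 : 0 < Real.pi := Real.pi_pos
  have hpisq : Real.pi ^ 2 ≤ 16 := by nlinarith
  have hx0 : (0:ℝ) < x := by linarith
  have hx1 : (0:ℝ) < x - 1 := by linarith
  have hxt : 2 * (x + 1) * t ≤ 3 := by
    have h1 : 2 * (x + 1) * t ≤ 2 * (x + 1) * (1 / x) :=
      mul_le_mul_of_nonneg_left ht1 (by linarith)
    have h2 : 2 * (x + 1) * (1 / x) ≤ 3 := by
      rw [mul_one_div, div_le_iff₀ hx0]
      linarith
    linarith
  have hxt2 : 2 * x * t ≤ 2 := by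
    have h1 : 2 * x * t ≤ 2 * x * (1 / x) :=
      mul_le_mul_of_nonneg_left ht1 (by linarith)
    have h2 : 2 * x * (1 / x) = 2 := by field_simp
    linarith
  have hL2 : 1 ≤ L ^ 2 := by nlinarith
  have hLL : L ≤ L ^ 2 := by nlinarith
  have hsqh : h ^ 2 ≤ 4 * L ^ 2 := by nlinarith
  have hxtn : 0 ≤ 2 * (x + 1) * t := by positivity
  have hxtn2 : 0 ≤ 2 * x * t := by positivity
  constructor
  · have hrw : 2 * ((x + 1) * (Real.pi ^ 2 / 6 - t) + x - h ^ 2 - 2 * h) / (x - 1) -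
        (Real.pi ^ 2 / 3 + 2) =
        (2 * Real.pi ^ 2 / 3 + 2 - 2 * (x + 1) * t - 2 * h ^ 2 - 4 * h) / (x - 1) := by
      field_simp
      ring
    rw [hrw, abs_div, abs_of_pos hx1]
    have hnum : |2 * Real.pi ^ 2 / 3 + 2 - 2 * (x + 1) * t - 2 * h ^ 2 - 4 * h| ≤ 32 * L ^ 2 := by
      rw [abs_le]
      constructor <;> nlinarith [sq_nonneg h]
    calc |2 * Real.pi ^ 2 / 3 + 2 - 2 * (x + 1) * t - 2 * h ^ 2 - 4 * h| / (x - 1)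
        ≤ 32 * L ^ 2 / (x - 1) := by gcongr
      _ ≤ 100 * L ^ 2 / x := by
          rw [div_le_div_iff₀ hx1 hx0]
          nlinarith
  · have hrw : (2 * x * (Real.pi ^ 2 / 6 - t) - 2 * x) / (x - 1) - (Real.pi ^ 2 / 3 - 2) =
        (Real.pi ^ 2 / 3 - 2 - 2 * x * t) / (x - 1) := by
      field_simp
      ring
    rw [hrw, abs_div, abs_of_pos hx1]
    have hnum : |Real.pi ^ 2 / 3 - 2 - 2 * x * t| ≤ 10 * L ^ 2 := by
      rw [abs_le]
      constructor <;> nlinarith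
    calc |Real.pi ^ 2 / 3 - 2 - 2 * x * t| / (x - 1)
        ≤ 10 * L ^ 2 / (x - 1) := by gcongr
      _ ≤ 100 * L ^ 2 / x := by
          rw [div_le_div_iff₀ hx1 hx0]
          nlinarith
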